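/- arXiv:1503.02273 — 3 statements merged into one kernel-verified Lean document; each statement's English description precedes it below -/
import Mathlib

section
/- A countable intersection of α-winning sets in ℝ^n is α-winning. -/
open Metric

/-- A closed ball in `V`, recorded by its center and radius. -/
structure GBall (V : Type*) where
  c : V
  r : ℝ

instance {V : Type*} [Inhabited V] : Inhabited (GBall V) := ⟨⟨default, 0⟩⟩

/-- The set of points of a recorded closed ball. -/
def GBall.toSet {V : Type*} [PseudoMetricSpace V] (B : GBall V) : Set V :=
  Metric.closedBall B.c B.r

/-- The history of a play of Schmidt's game.  A strategy for Alice is a map sending the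
list of Bob's balls chosen so far to Alice's next ball; a strategy for Bob is a map
sending the list of Alice's balls chosen so far to Bob's next ball (with Bob's first
ball being his strategy applied to the empty list).  `schmidtHist σA σB i` is the list
of the first `i` rounds `(B₁, A₁), …, (Bᵢ, Aᵢ)` of the induced play. -/
def schmidtHist {V : Type*} (σA σB : List (GBall V) → GBall V) :
    ℕ → List (GBall V × GBall V)
  | 0 => []
  | (i + 1) =>
    let h := schmidtHist σA σB i
    let b := σB (h.map Prod.snd)
    let a := σA (h.map Prod.fst ++ [b])
    h ++ [(b, a)]

/-- Bob's `i`-th ball (0-indexed: `bobBall σA σB 0 = B₁`). -/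
def bobBall {V : Type*} [Inhabited V] (σA σB : List (GBall V) → GBall V) (i : ℕ) :
    GBall V :=
  ((schmidtHist σA σB (i + 1)).getLastD default).1

/-- Alice's `i`-th ball (0-indexed: `aliceBall σA σB 0 = A₁`). -/
def aliceBall {V : Type*} [Inhabited V] (σA σB : List (GBall V) → GBall V) (i : ℕ) :
    GBall V :=
  ((schmidtHist σA σB (i + 1)).getLastD default).2

/-- Alice plays legally in the `(α, β)`-game: each of her balls is contained in Bob's
previous ball and has radius exactly `α` times its radius. -/
def AliceLegal {V : Type*} [PseudoMetricSpace V] [Inhabited V] (α : ℝ)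
    (σA σB : List (GBall V) → GBall V) : Prop :=
  ∀ i, (aliceBall σA σB i).toSet ⊆ (bobBall σA σB i).toSet ∧
    (aliceBall σA σB i).r = α * (bobBall σA σB i).r

/-- Bob plays legally in the `(α, β)`-game: his first ball has positive radius, and each
subsequent ball is contained in Alice's previous ball and has radius exactly `β` times
its radius. -/
def BobLegal {V : Type*} [PseudoMetricSpace V] [Inhabited V] (β : ℝ)
    (σA σB : List (GBall V) → GBall V) : Prop :=
  0 < (bobBall σA σB 0).r ∧
  ∀ i, (bobBall σA σB (i + 1)).toSet ⊆ (aliceBall σA σB i).toSet ∧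
    (bobBall σA σB (i + 1)).r = β * (aliceBall σA σB i).r

/-- `S` is `(α, β)`-winning: Alice has a strategy which is legal against every legal play
of Bob and forces the intersection of Bob's balls to lie inside `S`. -/
def SchmidtWins {V : Type*} [PseudoMetricSpace V] [Inhabited V] (α β : ℝ)
    (S : Set V) : Prop :=
  ∃ σA : List (GBall V) → GBall V, ∀ σB : List (GBall V) → GBall V,
    BobLegal β σA σB →
      AliceLegal α σA σB ∧ (⋂ i, (bobBall σA σB i).toSet) ⊆ S

/-- `S` is `α`-winning: it is `(α, β)`-winning for every `β ∈ (0, 1)`. -/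
def IsAlphaWinning {V : Type*} [PseudoMetricSpace V] [Inhabited V] (α : ℝ)
    (S : Set V) : Prop :=
  ∀ β : ℝ, 0 < β → β < 1 → SchmidtWins α β S

/-!
Alice plays the games for all the `S k` at once: round `i` of the real game (counted from `0`)
belongs to game `k` as its move `j`, where `i + 1 = 2 ^ k * (2 * j + 1)`. Game `k` thus comes
back every `2 ^ (k + 1)` rounds, during which the radius shrinks by the factor
`β * (α * β) ^ (2 ^ (k + 1) - 1)`; so the real play, read at the rounds of game `k`, is a
play of the `(α, β * (α * β) ^ (2 ^ (k + 1) - 1))`-game in which Alice follows her strategy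
for `S k`, and the limit point lies in `S k`.
-/

section Play

variable {V : Type*} [Inhabited V] (σA σB : List (GBall V) → GBall V)

theorem schmidtHist_succ (i : ℕ) :
    schmidtHist σA σB (i + 1) =
      schmidtHist σA σB i ++ [(bobBall σA σB i, aliceBall σA σB i)] := by
  simp [schmidtHist, bobBall, aliceBall]

theorem schmidtHist_eq_map_range (i : ℕ) :
    schmidtHist σA σB i =
      (List.range i).map fun m => (bobBall σA σB m, aliceBall σA σB m) := by
  induction i with
  | zero => rfl
  | succ i ih => rw [schmidtHist_succ, ih, List.range_succ, List.map_append]; rfl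

theorem bobBall_eq (i : ℕ) :
    bobBall σA σB i = σB ((List.range i).map (aliceBall σA σB)) := by
  have h : bobBall σA σB i = σB ((schmidtHist σA σB i).map Prod.snd) := by
    simp [bobBall, schmidtHist]
  rw [h, schmidtHist_eq_map_range, List.map_map]
  rfl

theorem aliceBall_eq (i : ℕ) :
    aliceBall σA σB i = σA ((List.range (i + 1)).map (bobBall σA σB)) := by
  have h : aliceBall σA σB i =
      σA ((schmidtHist σA σB i).map Prod.fst ++ [bobBall σA σB i]) := by
    simp [aliceBall, bobBall, schmidtHist]
  rw [h, schmidtHist_eq_map_range, List.map_map, List.range_succ, List.map_append]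
  rfl

end Play

def subgameRound (k j : ℕ) : ℕ := 2 ^ k * (2 * j + 1) - 1

def subgameOf (i : ℕ) : ℕ := padicValNat 2 (i + 1)

def subgameMove (i : ℕ) : ℕ := (i + 1) / 2 ^ (subgameOf i + 1)

theorem subgameRound_add_one (k j : ℕ) : subgameRound k j + 1 = 2 ^ k * (2 * j + 1) :=
  Nat.sub_add_cancel (Nat.one_le_iff_ne_zero.2 (by positivity))

theorem subgameOf_subgameRound (k j : ℕ) : subgameOf (subgameRound k j) = k := by
  rw [subgameOf, subgameRound_add_one, padicValNat.mul (by positivity) (by positivity),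
    padicValNat.prime_pow, padicValNat.eq_zero_of_not_dvd (by omega), Nat.add_zero]

theorem subgameMove_subgameRound (k j : ℕ) : subgameMove (subgameRound k j) = j := by
  rw [subgameMove, subgameOf_subgameRound, subgameRound_add_one, pow_succ,
    Nat.mul_div_mul_left _ _ (by positivity)]
  omega

theorem subgameRound_subgameOf_subgameMove (i : ℕ) :
    subgameRound (subgameOf i) (subgameMove i) = i := by
  obtain ⟨m, hm⟩ : 2 ^ subgameOf i ∣ i + 1 := pow_padicValNat_dvd
  have hnd : ¬ 2 ^ (subgameOf i + 1) ∣ i + 1 := pow_succ_padicValNat_not_dvd (by omega)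
  have hodd : ¬ 2 ∣ m := fun ⟨c, hc⟩ => hnd ⟨c, by rw [hm, hc]; ring⟩
  have hmove : subgameMove i = m / 2 := by
    rw [subgameMove, hm, pow_succ, Nat.mul_div_mul_left _ _ (by positivity)]
  have := subgameRound_add_one (subgameOf i) (m / 2)
  rw [show 2 * (m / 2) + 1 = m by omega, ← hm] at this
  rw [hmove]
  omega

theorem subgameRound_succ (k j : ℕ) :
    subgameRound k (j + 1) = subgameRound k j + 2 ^ (k + 1) := by
  have h1 := subgameRound_add_one k j
  have h2 := subgameRound_add_one k (j + 1)
  rw [pow_succ]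
  linarith

theorem subgameRound_strictMono (k : ℕ) : StrictMono (subgameRound k) :=
  strictMono_nat_of_lt_succ fun j => by
    rw [subgameRound_succ]; exact Nat.lt_add_of_pos_right (by positivity)

def AliceLegalAt {V : Type*} [PseudoMetricSpace V] [Inhabited V] (α : ℝ)
    (σA σB : List (GBall V) → GBall V) (i : ℕ) : Prop :=
  (aliceBall σA σB i).toSet ⊆ (bobBall σA σB i).toSet ∧
    (aliceBall σA σB i).r = α * (bobBall σA σB i).r

namespace BobLegal

variable {V : Type*} [PseudoMetricSpace V] [Inhabited V] {α β : ℝ}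
  {σA σB : List (GBall V) → GBall V}

theorem bobBall_add (hB : BobLegal β σA σB) {i : ℕ} :
    ∀ d, (∀ m, i ≤ m → m < i + d → AliceLegalAt α σA σB m) →
      (bobBall σA σB (i + d)).toSet ⊆ (bobBall σA σB i).toSet ∧
        (bobBall σA σB (i + d)).r = (α * β) ^ d * (bobBall σA σB i).r
  | 0, _ => by simp
  | d + 1, hA => by
    obtain ⟨ih_sub, ih_r⟩ := hB.bobBall_add d fun m h1 h2 => hA m h1 (by omega)
    obtain ⟨hA_sub, hA_r⟩ := hA (i + d) (by omega) (by omega)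
    obtain ⟨hB_sub, hB_r⟩ := hB.2 (i + d)
    refine ⟨hB_sub.trans (hA_sub.trans ih_sub), ?_⟩
    rw [← add_assoc, hB_r, hA_r, ih_r]
    ring

theorem bobBall_radius_pos (hB : BobLegal β σA σB) (hα : 0 < α) (hβ : 0 < β) {i : ℕ}
    (hA : ∀ m < i, AliceLegalAt α σA σB m) : 0 < (bobBall σA σB i).r := by
  have h := (hB.bobBall_add (i := 0) i fun m _ hm => hA m (by omega)).2
  rw [zero_add] at h
  rw [h]
  exact mul_pos (by positivity) hB.1

theorem bobBall_add_one_add (hB : BobLegal β σA σB) {i : ℕ} (d : ℕ)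
    (hA : ∀ m, i < m → m ≤ i + d → AliceLegalAt α σA σB m) :
    (bobBall σA σB (i + 1 + d)).toSet ⊆ (aliceBall σA σB i).toSet ∧
      (bobBall σA σB (i + 1 + d)).r = β * (α * β) ^ d * (aliceBall σA σB i).r := by
  obtain ⟨h_sub, h_r⟩ :=
    hB.bobBall_add (i := i + 1) d fun m h1 h2 => hA m (by omega) (by omega)
  obtain ⟨hB_sub, hB_r⟩ := hB.2 i
  refine ⟨h_sub.trans hB_sub, ?_⟩
  rw [h_r, hB_r]
  ring

end BobLegal

section Interleave

variable {V : Type*} [Inhabited V]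

def interleave (σ : ℕ → List (GBall V) → GBall V) : List (GBall V) → GBall V := fun l =>
  let i := l.length - 1
  σ (subgameOf i)
    ((List.range (subgameMove i + 1)).map fun t => l.getD (subgameRound (subgameOf i) t) default)

theorem aliceBall_interleave (σ : ℕ → List (GBall V) → GBall V)
    (σB : List (GBall V) → GBall V) (k j : ℕ) :
    aliceBall (interleave σ) σB (subgameRound k j) =
      σ k ((List.range (j + 1)).map fun t => bobBall (interleave σ) σB (subgameRound k t)) := by
  rw [aliceBall_eq, interleave]
  simp only [List.length_map, List.length_range, Nat.add_sub_cancel, subgameOf_subgameRound,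
    subgameMove_subgameRound]
  congr 1
  refine List.map_congr_left fun t ht => ?_
  have hlt : subgameRound k t < subgameRound k j + 1 := Nat.lt_succ_of_le <|
    (subgameRound_strictMono k).monotone (Nat.lt_succ_iff.1 (List.mem_range.1 ht))
  simp [List.getD_eq_getElem?_getD, hlt]

end Interleave

section SubBob

variable {V : Type*} [PseudoMetricSpace V] [Inhabited V] (b : ℝ)
  (σ : ℕ → List (GBall V) → GBall V) (σB : List (GBall V) → GBall V) (k : ℕ)

open Classical in
/-- Bob's `j`-th move in game `k` is the real Bob's move at round `subgameRound k j`, replaced by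
a canonical move whenever that one is illegal: Alice's winning strategy for game `k` need only
respond legally to a legal Bob, and we cannot know in advance that the copied moves are legal. -/
noncomputable def subBob : List (GBall V) → GBall V := fun l =>
  let B := bobBall (interleave σ) σB (subgameRound k l.length)
  match l.getLast? with
  | none => if 0 < B.r then B else ⟨default, 1⟩
  | some A => if B.toSet ⊆ A.toSet ∧ B.r = b * A.r then B else ⟨A.c, b * A.r⟩

variable {b}

theorem subBob_bobLegal (hb0 : 0 < b) (hb1 : b ≤ 1) : BobLegal b (σ k) (subBob b σ σB k) := by
  refine ⟨?_, fun t => ?_⟩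
  · rw [bobBall_eq]
    simp only [subBob, List.range_zero, List.map_nil, List.getLast?_nil, List.length_nil]
    split_ifs with h
    exacts [h, one_pos]
  · rw [bobBall_eq]
    simp only [subBob, List.range_succ, List.map_append, List.map_cons, List.map_nil,
      List.getLast?_concat, List.length_append, List.length_map, List.length_range,
      List.length_singleton]
    split_ifs with h
    · simpa using h
    · set A := aliceBall (σ k) (subBob b σ σB k) t
      refine ⟨?_, rfl⟩
      rcases le_or_gt 0 A.r with hr | hr
      · exact closedBall_subset_closedBall (mul_le_of_le_one_left hr hb1)
      · simp [GBall.toSet, closedBall_eq_empty.2 (mul_neg_of_pos_of_neg hb0 hr)]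

variable {σ σB k}

theorem bobBall_subBob_zero (h : 0 < (bobBall (interleave σ) σB (subgameRound k 0)).r) :
    bobBall (σ k) (subBob b σ σB k) 0 = bobBall (interleave σ) σB (subgameRound k 0) := by
  rw [bobBall_eq]
  simp [subBob, h]

theorem bobBall_subBob_succ {t : ℕ}
    (h : (bobBall (interleave σ) σB (subgameRound k (t + 1))).toSet ⊆
        (aliceBall (σ k) (subBob b σ σB k) t).toSet ∧
      (bobBall (interleave σ) σB (subgameRound k (t + 1))).r =
        b * (aliceBall (σ k) (subBob b σ σB k) t).r) :
    bobBall (σ k) (subBob b σ σB k) (t + 1) =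
      bobBall (interleave σ) σB (subgameRound k (t + 1)) := by
  rw [bobBall_eq]
  simp [subBob, List.range_succ, h]

end SubBob

noncomputable def subgameBeta (α β : ℝ) (k : ℕ) : ℝ := β * (α * β) ^ (2 ^ (k + 1) - 1)

theorem subgameBeta_pos {α β : ℝ} (hα : 0 < α) (hβ : 0 < β) (k : ℕ) :
    0 < subgameBeta α β k := by
  unfold subgameBeta; positivity

theorem subgameBeta_lt_one {α β : ℝ} (hα0 : 0 ≤ α) (hα1 : α ≤ 1) (hβ0 : 0 < β)
    (hβ1 : β < 1) (k : ℕ) : subgameBeta α β k < 1 :=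
  mul_lt_one_of_nonneg_of_lt_one_left hβ0.le hβ1
    (pow_le_one₀ (mul_nonneg hα0 hβ0.le) (mul_le_one₀ hα1 hβ0.le hβ1.le))

theorem BobLegal.bobBall_subgameRound_succ {V : Type*} [PseudoMetricSpace V] [Inhabited V]
    {α β : ℝ} {σA σB : List (GBall V) → GBall V} (hB : BobLegal β σA σB) {k t : ℕ}
    (hA : ∀ m, subgameRound k t < m → m < subgameRound k (t + 1) →
      AliceLegalAt α σA σB m) :
    (bobBall σA σB (subgameRound k (t + 1))).toSet ⊆
        (aliceBall σA σB (subgameRound k t)).toSet ∧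
      (bobBall σA σB (subgameRound k (t + 1))).r =
        subgameBeta α β k * (aliceBall σA σB (subgameRound k t)).r := by
  have hround : subgameRound k (t + 1) = subgameRound k t + 1 + (2 ^ (k + 1) - 1) := by
    rw [subgameRound_succ]
    have := Nat.one_le_two_pow (n := k + 1)
    omega
  rw [hround]
  exact hB.bobBall_add_one_add _ fun m h1 h2 => hA m h1 (by omega)

section Agreement

variable {V : Type*} [PseudoMetricSpace V] [Inhabited V] {α β b : ℝ}
  {σ : ℕ → List (GBall V) → GBall V} {σB : List (GBall V) → GBall V} {k j : ℕ}

theorem aliceBall_subBob_eq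
    (h : ∀ t ≤ j, bobBall (σ k) (subBob b σ σB k) t =
      bobBall (interleave σ) σB (subgameRound k t)) :
    aliceBall (σ k) (subBob b σ σB k) j = aliceBall (interleave σ) σB (subgameRound k j) := by
  rw [aliceBall_eq, aliceBall_interleave]
  exact congrArg (σ k) (List.map_congr_left fun t ht =>
    h t (Nat.lt_succ_iff.1 (List.mem_range.1 ht)))

theorem aliceLegalAt_interleave (hA : AliceLegal α (σ k) (subBob b σ σB k))
    (h : ∀ t ≤ j, bobBall (σ k) (subBob b σ σB k) t =
      bobBall (interleave σ) σB (subgameRound k t)) :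
    AliceLegalAt α (interleave σ) σB (subgameRound k j) := by
  have := hA j
  rwa [aliceBall_subBob_eq h, h j le_rfl] at this

theorem bobBall_subBob_eq (hα : 0 < α) (hβ : 0 < β) (hB : BobLegal β (interleave σ) σB)
    (hA : ∀ k, AliceLegal α (σ k) (subBob (subgameBeta α β k) σ σB k)) (k j : ℕ) :
    bobBall (σ k) (subBob (subgameBeta α β k) σ σB k) j =
      bobBall (interleave σ) σB (subgameRound k j) := by
  induction hi : subgameRound k j using Nat.strong_induction_on generalizing k j with
  | _ i IH =>
  subst hi
  have agree_lt : ∀ k' t, subgameRound k' t < subgameRound k j →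
      bobBall (σ k') (subBob (subgameBeta α β k') σ σB k') t =
        bobBall (interleave σ) σB (subgameRound k' t) :=
    fun k' t h => IH _ h k' t rfl
  have alice_lt : ∀ m < subgameRound k j, AliceLegalAt α (interleave σ) σB m := by
    intro m hm
    rw [← subgameRound_subgameOf_subgameMove m] at hm ⊢
    exact aliceLegalAt_interleave (hA _) fun t ht =>
      agree_lt _ _ (((subgameRound_strictMono _).monotone ht).trans_lt hm)
  cases j with
  | zero => exact bobBall_subBob_zero (hB.bobBall_radius_pos hα hβ alice_lt)
  | succ t =>
    apply bobBall_subBob_succ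
    rw [aliceBall_subBob_eq fun t' ht' =>
      agree_lt k t' (subgameRound_strictMono k (Nat.lt_succ_of_le ht'))]
    exact hB.bobBall_subgameRound_succ fun m _ hm => alice_lt m hm

end Agreement

theorem SchmidtWins.iInter {V : Type*} [PseudoMetricSpace V] [Inhabited V] {α β : ℝ}
    {S : ℕ → Set V} (hα0 : 0 < α) (hα1 : α ≤ 1) (hβ0 : 0 < β) (hβ1 : β < 1)
    (hS : ∀ k, SchmidtWins α (subgameBeta α β k) (S k)) : SchmidtWins α β (⋂ k, S k) := by
  choose σ hσ using hS
  refine ⟨interleave σ, fun σB hB => ?_⟩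
  have hsub k := hσ k _ (subBob_bobLegal σ σB k (subgameBeta_pos hα0 hβ0 k)
    (subgameBeta_lt_one hα0.le hα1 hβ0 hβ1 k).le)
  have agree := bobBall_subBob_eq hα0 hβ0 hB fun k => (hsub k).1
  refine ⟨fun i => ?_, fun x hx => Set.mem_iInter.2 fun k => (hsub k).2 ?_⟩
  · rw [← subgameRound_subgameOf_subgameMove i]
    exact aliceLegalAt_interleave ((hsub _).1) fun t _ => agree _ t
  · exact Set.mem_iInter.2 fun j => agree k j ▸ Set.mem_iInter.1 hx _

theorem IsAlphaWinning.iInter {V : Type*} [PseudoMetricSpace V] [Inhabited V] {α : ℝ}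
    {S : ℕ → Set V} (hα0 : 0 < α) (hα1 : α ≤ 1) (hS : ∀ k, IsAlphaWinning α (S k)) :
    IsAlphaWinning α (⋂ k, S k) := fun _ hβ0 hβ1 =>
  SchmidtWins.iInter hα0 hα1 hβ0 hβ1 fun k =>
    hS k _ (subgameBeta_pos hα0 hβ0 k) (subgameBeta_lt_one hα0.le hα1 hβ0 hβ1 k)

/-- A countable intersection of `α`-winning sets in `ℝⁿ` is `α`-winning. -/
theorem countable_inter_alpha_winning (n : ℕ) (α : ℝ) (hα0 : 0 < α) (hα1 : α < 1)
    (S : ℕ → Set (EuclideanSpace ℝ (Fin n)))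
    (hS : ∀ i, IsAlphaWinning α (S i)) :
    IsAlphaWinning α (⋂ i, S i) :=
  IsAlphaWinning.iInter hα0 hα1.le hS
end

section
/- The image of an α-winning set in ℝ^n under a bilipschitz homeomorphism f: ℝ^n → ℝ^n is α'-winning, where α' depends only on α and the bilipschitz constant of f. -/
open Metric

/-!
Alice transports her strategy along the bijection `e`, where `e` and `e⁻¹` are `K`-Lipschitz:
Bob's ball `B(c, r)` is pulled back to `B(e⁻¹ c, r / K)`, Alice answers it with her
`(α, β / K²)`-strategy, and her answer `B(a, s)` is pushed forward to `B(e a, s / K)`.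
Dividing the radius by `K` makes the pulled-back or pushed-forward ball lie inside the
`e`-preimage or `e`-image of the original, so legal moves correspond to legal moves, with
ratios `α / K²` for Alice and `β / K²` for the simulated Bob. No limit argument is needed at
the end: a point of Bob's `(i+1)`-st ball lies in Alice's `i`-th ball, so its preimage lies
in the simulated Alice ball and hence in the simulated Bob ball of round `i`.
-/

namespace GBall

variable {V W : Type*}

def map (f : V → W) (s : ℝ) (B : GBall V) : GBall W := ⟨f B.c, s * B.r⟩

@[simp] lemma map_c (f : V → W) (s : ℝ) (B : GBall V) : (B.map f s).c = f B.c := rfl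

@[simp] lemma map_r (f : V → W) (s : ℝ) (B : GBall V) : (B.map f s).r = s * B.r := rfl

noncomputable def mapEquiv (e : V ≃ W) {K : NNReal} (hK : K ≠ 0) : GBall V ≃ GBall W where
  toFun := map e K
  invFun := map e.symm (K : ℝ)⁻¹
  left_inv B := by simp [map, inv_mul_cancel_left₀ (NNReal.coe_ne_zero.mpr hK)]
  right_inv B := by simp [map, mul_inv_cancel_left₀ (NNReal.coe_ne_zero.mpr hK)]

@[simp] lemma mapEquiv_apply (e : V ≃ W) {K : NNReal} (hK : K ≠ 0) (B : GBall V) :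
    mapEquiv e hK B = B.map e K := rfl

@[simp] lemma mapEquiv_symm_apply (e : V ≃ W) {K : NNReal} (hK : K ≠ 0) (B : GBall W) :
    (mapEquiv e hK).symm B = B.map e.symm (K : ℝ)⁻¹ := rfl

variable [PseudoMetricSpace V] [PseudoMetricSpace W]

lemma toSet_map_inv_subset_image (e : V ≃ W) {K : NNReal} (hK : K ≠ 0)
    (he : LipschitzWith K e.symm) (B : GBall V) :
    (B.map e (K : ℝ)⁻¹).toSet ⊆ e '' B.toSet := by
  intro y hy
  refine ⟨e.symm y, ?_, e.apply_symm_apply y⟩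
  have := he.mapsTo_closedBall (e B.c) _ hy
  rwa [e.symm_apply_apply, map_r, mul_inv_cancel_left₀ (NNReal.coe_ne_zero.mpr hK)] at this

end GBall

section Transfer

variable {V W : Type*} (φ : GBall V ≃ GBall W) (ψ : GBall V → GBall W)

def aliceTransfer (σA : List (GBall V) → GBall V) : List (GBall W) → GBall W :=
  fun l => ψ (σA (l.map φ.symm))

def bobTransfer (σB : List (GBall W) → GBall W) : List (GBall V) → GBall V :=
  fun l => φ.symm (σB (l.map ψ))

lemma schmidtHist_succ_s6 (σA σB : List (GBall V) → GBall V) (i : ℕ) :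
    schmidtHist σA σB (i + 1) =
      schmidtHist σA σB i ++
        [(σB ((schmidtHist σA σB i).map Prod.snd),
          σA ((schmidtHist σA σB i).map Prod.fst ++
            [σB ((schmidtHist σA σB i).map Prod.snd)]))] := rfl

lemma bobBall_eq_s6 [Inhabited V] (σA σB : List (GBall V) → GBall V) (i : ℕ) :
    bobBall σA σB i = σB ((schmidtHist σA σB i).map Prod.snd) := by
  simp [bobBall, schmidtHist_succ_s6]

lemma aliceBall_eq_s6 [Inhabited V] (σA σB : List (GBall V) → GBall V) (i : ℕ) :
    aliceBall σA σB i = σA ((schmidtHist σA σB i).map Prod.fst ++ [bobBall σA σB i]) := by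
  simp [aliceBall, bobBall_eq_s6, schmidtHist_succ_s6]

lemma schmidtHist_aliceTransfer (σA : List (GBall V) → GBall V)
    (σB : List (GBall W) → GBall W) (i : ℕ) :
    schmidtHist (aliceTransfer φ ψ σA) σB i =
      (schmidtHist σA (bobTransfer φ ψ σB) i).map (Prod.map φ ψ) := by
  induction i with
  | zero => rfl
  | succ i ih =>
    rw [schmidtHist_succ_s6, schmidtHist_succ_s6, ih]
    simp [aliceTransfer, bobTransfer, Function.comp_def]

lemma bobBall_aliceTransfer [Inhabited V] [Inhabited W] (σA : List (GBall V) → GBall V)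
    (σB : List (GBall W) → GBall W) (i : ℕ) :
    bobBall (aliceTransfer φ ψ σA) σB i = φ (bobBall σA (bobTransfer φ ψ σB) i) := by
  simp [bobBall_eq_s6, schmidtHist_aliceTransfer, bobTransfer, Function.comp_def]

lemma aliceBall_aliceTransfer [Inhabited V] [Inhabited W] (σA : List (GBall V) → GBall V)
    (σB : List (GBall W) → GBall W) (i : ℕ) :
    aliceBall (aliceTransfer φ ψ σA) σB i = ψ (aliceBall σA (bobTransfer φ ψ σB) i) := by
  rw [aliceBall_eq_s6, aliceBall_eq_s6, schmidtHist_aliceTransfer, bobBall_aliceTransfer]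
  simp [aliceTransfer, Function.comp_def]

end Transfer

section Bilipschitz

open GBall

variable {V W : Type*} [PseudoMetricSpace V] [PseudoMetricSpace W] [Inhabited V] [Inhabited W]
  (e : V ≃ W) {K : NNReal}

lemma bobLegal_bobTransfer (hK : K ≠ 0) (he : LipschitzWith K e) (he' : LipschitzWith K e.symm)
    {β : ℝ} {σA : List (GBall V) → GBall V} {σB : List (GBall W) → GBall W}
    (hB : BobLegal β (aliceTransfer (mapEquiv e hK) (map e (K : ℝ)⁻¹) σA) σB) :
    BobLegal (β / K ^ 2) σA (bobTransfer (mapEquiv e hK) (map e (K : ℝ)⁻¹) σB) := by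
  constructor
  · have h0 := hB.1
    rw [bobBall_aliceTransfer, mapEquiv_apply, map_r] at h0
    exact pos_of_mul_pos_right h0 K.coe_nonneg
  · intro i
    obtain ⟨hsub, hrad⟩ := hB.2 i
    rw [bobBall_aliceTransfer, aliceBall_aliceTransfer] at hsub hrad
    set B := bobBall σA (bobTransfer (mapEquiv e hK) (map e (K : ℝ)⁻¹) σB) (i + 1)
    set A := aliceBall σA (bobTransfer (mapEquiv e hK) (map e (K : ℝ)⁻¹) σB) i
    constructor
    · calc B.toSet = ((mapEquiv e hK).symm (mapEquiv e hK B)).toSet := by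
            rw [Equiv.symm_apply_apply]
        _ ⊆ e.symm '' (mapEquiv e hK B).toSet := toSet_map_inv_subset_image e.symm hK he _
        _ ⊆ e.symm '' (e '' A.toSet) :=
          Set.image_mono (hsub.trans (toSet_map_inv_subset_image e hK he' A))
        _ = A.toSet := e.symm_image_image _
    · have hK' : (K : ℝ) ≠ 0 := NNReal.coe_ne_zero.mpr hK
      simp only [mapEquiv_apply, map_r] at hrad
      field_simp at hrad ⊢
      linear_combination hrad

lemma aliceLegal_aliceTransfer (hK : K ≠ 0) (he : LipschitzWith K e)
    (he' : LipschitzWith K e.symm) {α : ℝ} {σA : List (GBall V) → GBall V}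
    {σB : List (GBall W) → GBall W}
    (hA : AliceLegal α σA (bobTransfer (mapEquiv e hK) (map e (K : ℝ)⁻¹) σB)) :
    AliceLegal (α / K ^ 2) (aliceTransfer (mapEquiv e hK) (map e (K : ℝ)⁻¹) σA) σB := by
  intro i
  rw [bobBall_aliceTransfer, aliceBall_aliceTransfer]
  obtain ⟨hsub, hrad⟩ := hA i
  set B := bobBall σA (bobTransfer (mapEquiv e hK) (map e (K : ℝ)⁻¹) σB) i
  set A := aliceBall σA (bobTransfer (mapEquiv e hK) (map e (K : ℝ)⁻¹) σB) i
  constructor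
  · calc (A.map e (K : ℝ)⁻¹).toSet ⊆ e '' A.toSet := toSet_map_inv_subset_image e hK he' A
      _ ⊆ e '' B.toSet := Set.image_mono hsub
      _ = e '' ((mapEquiv e hK).symm (mapEquiv e hK B)).toSet := by rw [Equiv.symm_apply_apply]
      _ ⊆ e '' (e.symm '' (mapEquiv e hK B).toSet) :=
        Set.image_mono (toSet_map_inv_subset_image e.symm hK he _)
      _ = (mapEquiv e hK B).toSet := e.image_symm_image _
  · have hK' : (K : ℝ) ≠ 0 := NNReal.coe_ne_zero.mpr hK
    simp only [mapEquiv_apply, map_r, hrad]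
    field_simp

lemma iInter_bobBall_aliceTransfer_subset (hK : K ≠ 0) (he' : LipschitzWith K e.symm)
    {α β : ℝ} {σA : List (GBall V) → GBall V} {σB : List (GBall W) → GBall W}
    (hB : BobLegal β (aliceTransfer (mapEquiv e hK) (map e (K : ℝ)⁻¹) σA) σB)
    (hA : AliceLegal α σA (bobTransfer (mapEquiv e hK) (map e (K : ℝ)⁻¹) σB)) :
    ⋂ i, (bobBall (aliceTransfer (mapEquiv e hK) (map e (K : ℝ)⁻¹) σA) σB i).toSet ⊆
      e '' ⋂ i, (bobBall σA (bobTransfer (mapEquiv e hK) (map e (K : ℝ)⁻¹) σB) i).toSet := by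
  intro x hx
  refine ⟨e.symm x, Set.mem_iInter.2 fun i => ?_, e.apply_symm_apply x⟩
  have hxA := (hB.2 i).1 (Set.mem_iInter.1 hx (i + 1))
  rw [aliceBall_aliceTransfer] at hxA
  obtain ⟨y, hy, rfl⟩ := toSet_map_inv_subset_image e hK he' _ hxA
  simpa using (hA i).1 hy

theorem SchmidtWins.image_of_lipschitzWith (hK : K ≠ 0) (he : LipschitzWith K e)
    (he' : LipschitzWith K e.symm) {α β : ℝ} {S : Set V} (hS : SchmidtWins α (β / K ^ 2) S) :
    SchmidtWins (α / K ^ 2) β (e '' S) := by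
  obtain ⟨σA, hσA⟩ := hS
  refine ⟨aliceTransfer (mapEquiv e hK) (map e (K : ℝ)⁻¹) σA, fun σB hB => ?_⟩
  obtain ⟨hA, hAS⟩ := hσA _ (bobLegal_bobTransfer e hK he he' hB)
  exact ⟨aliceLegal_aliceTransfer e hK he he' hA,
    (iInter_bobBall_aliceTransfer_subset e hK he' hB hA).trans (Set.image_mono hAS)⟩

theorem IsAlphaWinning.image_of_lipschitzWith (hK : 1 ≤ K) (he : LipschitzWith K e)
    (he' : LipschitzWith K e.symm) {α : ℝ} {S : Set V} (hS : IsAlphaWinning α S) :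
    IsAlphaWinning (α / K ^ 2) (e '' S) := by
  have hK2 : (1 : ℝ) ≤ (K : ℝ) ^ 2 := one_le_pow₀ (by exact_mod_cast hK)
  intro β hβ0 hβ1
  refine SchmidtWins.image_of_lipschitzWith e (one_pos.trans_le hK).ne' he he' (hS _ ?_ ?_)
  · exact div_pos hβ0 (one_pos.trans_le hK2)
  · exact (div_le_self hβ0.le hK2).trans_lt hβ1

end Bilipschitz

/-- The image of an `α`-winning set in `ℝⁿ` under a bilipschitz
homeomorphism of `ℝⁿ` is `α'`-winning, where `α'` depends only on `α` and the
bilipschitz constant. -/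
theorem alpha_winning_image_bilipschitz (n : ℕ) (α : ℝ) (hα0 : 0 < α) (hα1 : α < 1)
    (L : ℝ) (hL : 1 ≤ L) :
    ∃ α' : ℝ, 0 < α' ∧ α' < 1 ∧
      ∀ f : EuclideanSpace ℝ (Fin n) → EuclideanSpace ℝ (Fin n),
        Function.Surjective f →
        (∀ x y, (1 / L) * dist x y ≤ dist (f x) (f y) ∧ dist (f x) (f y) ≤ L * dist x y) →
        ∀ S : Set (EuclideanSpace ℝ (Fin n)), IsAlphaWinning α S →
          IsAlphaWinning α' (f '' S) := by
  have hL0 : 0 < L := one_pos.trans_le hL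
  have hL2 : 1 ≤ L ^ 2 := one_le_pow₀ hL
  refine ⟨α / L ^ 2, by positivity, (div_le_self hα0.le hL2).trans_lt hα1, ?_⟩
  intro f hsurj hbil S hS
  have hanti : AntilipschitzWith L.toNNReal f := AntilipschitzWith.of_le_mul_dist fun x y => by
    rw [Real.coe_toNNReal _ hL0.le]
    have := mul_le_mul_of_nonneg_left (hbil x y).1 hL0.le
    rwa [← mul_assoc, mul_one_div_cancel hL0.ne', one_mul] at this
  let e := Equiv.ofBijective f ⟨hanti.injective, hsurj⟩
  have he : LipschitzWith L.toNNReal e := LipschitzWith.of_dist_le' fun x y => (hbil x y).2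
  have he' : LipschitzWith L.toNNReal e.symm := hanti.to_rightInverse e.right_inv
  have hwin := hS.image_of_lipschitzWith e (by simpa using hL) he he'
  rwa [Real.coe_toNNReal _ hL0.le] at hwin
end

section
/- For a hyperbolic linear automorphism T of T² induced by a matrix in GL(2,ℤ) with no eigenvalues of absolute value 1, and any point y₀ ∈ T², the set ND(T, y₀) of points whose forward T-orbit closure avoids y₀ is dense in T². -/
/-!
Since `det A = ±1`, `T` is an injective endomorphism of the group `𝕋²`, so it preserves additive
orders and the forward orbit of a torsion point `x` is a finite, hence closed, set of points of
the same order as `x`. Such an orbit avoids `y₀` as soon as the order of `x` differs from that of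
`y₀` (order `0` meaning infinite order). For a prime `p`, the nonzero `p`-torsion points all have
order `p` and are `2/p`-dense, so taking `p` larger than the order of `y₀` gives density.
-/

open Metric

/-- The 2-torus `ℝ²/ℤ²`, realized as a product of two circles `ℝ/ℤ`. -/
abbrev Torus2 : Type := AddCircle (1 : ℝ) × AddCircle (1 : ℝ)

/-- The plane `ℝ²` (with the Euclidean metric), universal cover of the torus. -/
abbrev Plane : Type := EuclideanSpace ℝ (Fin 2)

/-- The covering projection `ℝ² → 𝕋²`. -/
noncomputable def projT2 (v : Plane) : Torus2 := (↑(v 0), ↑(v 1))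

/-- The linear action of an integer matrix `A` on `ℝ²`. -/
noncomputable def linAct (A : Matrix (Fin 2) (Fin 2) ℤ) (v : Plane) : Plane :=
  (EuclideanSpace.equiv (Fin 2) ℝ).symm
    ![(A 0 0 : ℝ) * v 0 + (A 0 1 : ℝ) * v 1, (A 1 0 : ℝ) * v 0 + (A 1 1 : ℝ) * v 1]

/-- `ND(T, y₀)`: the set of points of the torus whose forward `T`-orbit closure does
not contain `y₀`. -/
def nonDenseSet (T : Torus2 → Torus2) (y₀ : Torus2) : Set Torus2 :=
  {x | y₀ ∉ closure (Set.range fun n : ℕ => T^[n] x)}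

theorem projT2_add (v w : Plane) : projT2 (v + w) = projT2 v + projT2 w := rfl

theorem projT2_surjective : Function.Surjective projT2 := by
  rintro ⟨x, y⟩
  obtain ⟨s, rfl⟩ := QuotientAddGroup.mk_surjective x
  obtain ⟨t, rfl⟩ := QuotientAddGroup.mk_surjective y
  exact ⟨!₂[s, t], rfl⟩

theorem projT2_eq_zero_iff (v : Plane) :
    projT2 v = 0 ↔ (∃ k : ℤ, k = v 0) ∧ ∃ l : ℤ, l = v 1 := by
  simp only [projT2, Prod.ext_iff, Prod.fst_zero, Prod.snd_zero, AddCircle.coe_eq_zero_iff,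
    zsmul_one]

theorem linAct_add (A : Matrix (Fin 2) (Fin 2) ℤ) (v w : Plane) :
    linAct A (v + w) = linAct A v + linAct A w := by
  ext i
  fin_cases i <;>
    simp only [linAct, PiLp.add_apply, PiLp.continuousLinearEquiv_symm_apply, Fin.zero_eta,
      Fin.mk_one, Matrix.cons_val_zero, Matrix.cons_val_one, Matrix.cons_val_fin_one] <;> ring

theorem linAct_one (v : Plane) : linAct 1 v = v := by
  ext i
  fin_cases i <;> simp [linAct]

theorem linAct_linAct (A B : Matrix (Fin 2) (Fin 2) ℤ) (v : Plane) :
    linAct A (linAct B v) = linAct (A * B) v := by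
  ext i
  fin_cases i <;>
    simp only [linAct, PiLp.continuousLinearEquiv_symm_apply, Fin.zero_eta, Fin.mk_one,
      Matrix.cons_val_zero, Matrix.cons_val_one, Matrix.cons_val_fin_one, Matrix.mul_apply,
      Fin.sum_univ_two, Int.cast_add, Int.cast_mul] <;> ring

theorem projT2_linAct_eq_zero (A : Matrix (Fin 2) (Fin 2) ℤ) {v : Plane} (hv : projT2 v = 0) :
    projT2 (linAct A v) = 0 := by
  obtain ⟨⟨k, hk⟩, l, hl⟩ := (projT2_eq_zero_iff v).1 hv
  exact (projT2_eq_zero_iff _).2 ⟨⟨A 0 0 * k + A 0 1 * l, by simp [linAct, hk, hl]⟩,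
    A 1 0 * k + A 1 1 * l, by simp [linAct, hk, hl]⟩

section InducedMap

variable {A : Matrix (Fin 2) (Fin 2) ℤ} {T : Torus2 → Torus2}

theorem map_add_of_semiconj_linAct (hT : ∀ v : Plane, T (projT2 v) = projT2 (linAct A v))
    (x y : Torus2) : T (x + y) = T x + T y := by
  obtain ⟨v, rfl⟩ := projT2_surjective x
  obtain ⟨w, rfl⟩ := projT2_surjective y
  rw [← projT2_add, hT, hT, hT, linAct_add, projT2_add]

theorem eq_zero_of_semiconj_linAct (hdet : A.det = 1 ∨ A.det = -1)
    (hT : ∀ v : Plane, T (projT2 v) = projT2 (linAct A v)) {x : Torus2} (hx : T x = 0) :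
    x = 0 := by
  obtain ⟨v, rfl⟩ := projT2_surjective x
  have hA : IsUnit A.det := by rcases hdet with h | h <;> simp [h]
  have := projT2_linAct_eq_zero A⁻¹ (hT v ▸ hx)
  rwa [linAct_linAct, Matrix.nonsing_inv_mul A hA, linAct_one] at this

end InducedMap

namespace AddCircle

variable {a : ℝ} [ha : Fact (0 < a)]

theorem exists_nsmul_eq_zero_dist_le {n : ℕ} (hn : 0 < n) (u : AddCircle a) :
    ∃ w : AddCircle a, n • w = 0 ∧ dist w u ≤ a / n := by
  obtain ⟨t, rfl⟩ := QuotientAddGroup.mk_surjective u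
  have han : 0 < a / n := div_pos ha.out (Nat.cast_pos.2 hn)
  set k : ℤ := ⌊n * t / a⌋
  refine ⟨((k * a / n : ℝ) : AddCircle a), ?_, ?_⟩
  · rw [← coe_nsmul, nsmul_eq_mul, mul_div_cancel₀ _ (Nat.cast_pos.2 hn).ne', ← zsmul_eq_mul,
      coe_zsmul, coe_period, smul_zero]
  · have hk : |(k : ℝ) - n * t / a| ≤ 1 := by
      rw [abs_le]
      constructor <;> linarith [Int.floor_le (n * t / a), Int.lt_floor_add_one (n * t / a)]
    calc dist ((k * a / n : ℝ) : AddCircle a) (t : AddCircle a)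
        ≤ |k * a / n - t| := by
          rw [dist_eq_norm, ← coe_sub]
          exact QuotientAddGroup.norm_mk_le_norm
      _ = |a / n * (k - n * t / a)| := by
          congr 1
          field_simp [ha.out.ne']
      _ = a / n * |(k : ℝ) - n * t / a| := by rw [abs_mul, abs_of_pos han]
      _ ≤ a / n := mul_le_of_le_one_right han.le hk

theorem exists_nsmul_eq_zero_ne_zero_dist_le {n : ℕ} (hn : 2 ≤ n) (u : AddCircle a) :
    ∃ w : AddCircle a, n • w = 0 ∧ w ≠ 0 ∧ dist w u ≤ 2 * a / n := by
  have han : 0 < a / n := div_pos ha.out (by positivity)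
  obtain ⟨w, hw, hwu⟩ := exists_nsmul_eq_zero_dist_le (n := n) (by omega) u
  by_cases hw0 : w = 0
  · subst hw0
    have han_lt : a / n < a := div_lt_self ha.out (by exact_mod_cast hn)
    refine ⟨((a / n : ℝ) : AddCircle a), ?_, ?_, ?_⟩
    · rw [← coe_nsmul, nsmul_eq_mul, mul_div_cancel₀ _ (by positivity), coe_period]
    · rw [Ne, coe_eq_zero_iff_of_mem_Ico ⟨han.le, han_lt⟩]
      exact han.ne'
    · calc dist ((a / n : ℝ) : AddCircle a) u
          ≤ dist ((a / n : ℝ) : AddCircle a) 0 + dist 0 u := dist_triangle _ _ _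
        _ ≤ a / n + a / n := by
          gcongr
          rw [dist_zero_right]
          exact QuotientAddGroup.norm_mk_le_norm.trans (abs_of_pos han).le
        _ = 2 * a / n := by ring
  · exact ⟨w, hw, hw0, hwu.trans (by gcongr; linarith [ha.out])⟩

end AddCircle

namespace Torus2

theorem finite_nsmul_eq_zero {n : ℕ} (hn : 0 < n) : {x : Torus2 | n • x = 0}.Finite :=
  ((AddCircle.finite_torsion 1 hn).prod (AddCircle.finite_torsion 1 hn)).subset
    fun _ hx => ⟨congrArg Prod.fst hx, congrArg Prod.snd hx⟩

theorem exists_nsmul_eq_zero_ne_zero_dist_le {n : ℕ} (hn : 2 ≤ n) (z : Torus2) :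
    ∃ x : Torus2, n • x = 0 ∧ x ≠ 0 ∧ dist x z ≤ 2 / n := by
  obtain ⟨w₁, hw₁, hw₁0, hw₁z⟩ := AddCircle.exists_nsmul_eq_zero_ne_zero_dist_le hn z.1
  obtain ⟨w₂, hw₂, hw₂z⟩ := AddCircle.exists_nsmul_eq_zero_dist_le (by omega : 0 < n) z.2
  refine ⟨(w₁, w₂), Prod.ext hw₁ hw₂, fun h => hw₁0 (congrArg Prod.fst h), ?_⟩
  rw [Prod.dist_eq, max_le_iff]
  refine ⟨by simpa using hw₁z, hw₂z.trans ?_⟩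
  gcongr
  norm_num

end Torus2

theorem addOrderOf_iterate_of_injective {G : Type*} [AddMonoid G] (f : G →+ G)
    (hf : Function.Injective f) (x : G) (n : ℕ) : addOrderOf (f^[n] x) = addOrderOf x := by
  induction n with
  | zero => rfl
  | succ n ih => rw [Function.iterate_succ_apply', addOrderOf_injective f hf, ih]

theorem mem_nonDenseSet_of_addOrderOf_ne (f : Torus2 →+ Torus2) (hf : Function.Injective f)
    {x y₀ : Torus2} (hx : IsOfFinAddOrder x) (hne : addOrderOf x ≠ addOrderOf y₀) :
    x ∈ nonDenseSet f y₀ := by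
  have horbit : Set.range (fun n => f^[n] x) ⊆ {z | addOrderOf x • z = 0} := by
    rintro _ ⟨n, rfl⟩
    rw [Set.mem_ofPred_eq, ← addOrderOf_iterate_of_injective f hf x n]
    exact addOrderOf_nsmul_eq_zero _
  rw [nonDenseSet, Set.mem_ofPred_eq,
    ((Torus2.finite_nsmul_eq_zero hx.addOrderOf_pos).subset horbit).isClosed.closure_eq]
  rintro ⟨n, hn⟩
  exact hne (by rw [← hn, addOrderOf_iterate_of_injective f hf])

theorem hyperbolic_auto_nondense_dense_general (A : Matrix (Fin 2) (Fin 2) ℤ)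
    (hdet : A.det = 1 ∨ A.det = -1)
    (T : Torus2 → Torus2) (hT : ∀ v : Plane, T (projT2 v) = projT2 (linAct A v))
    (y₀ : Torus2) :
    Dense (nonDenseSet T y₀) := by
  let f : Torus2 →+ Torus2 := AddMonoidHom.mk' T (map_add_of_semiconj_linAct hT)
  have hf : Function.Injective f :=
    (injective_iff_map_eq_zero f).2 fun _ => eq_zero_of_semiconj_linAct hdet hT
  refine Metric.dense_iff.2 fun z r hr => ?_
  obtain ⟨p, hp_ge, hp⟩ := Nat.exists_infinite_primes (max ⌈2 / r⌉₊ (addOrderOf y₀) + 1)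
  have : Fact p.Prime := ⟨hp⟩
  obtain ⟨x, hpx, hx0, hxz⟩ := Torus2.exists_nsmul_eq_zero_ne_zero_dist_le hp.two_le z
  have hxp : addOrderOf x = p := addOrderOf_eq_prime hpx hx0
  refine ⟨x, ?_, mem_nonDenseSet_of_addOrderOf_ne f hf ?_ ?_⟩
  · have h2r : 2 / r < p := Nat.lt_of_ceil_lt (by omega)
    exact hxz.trans_lt ((div_lt_comm₀ (Nat.cast_pos.2 hp.pos) hr).2 h2r)
  · exact addOrderOf_pos_iff.1 (hxp ▸ hp.pos)
  · rw [hxp]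
    omega

/-- For the hyperbolic linear automorphism `T` of the 2-torus induced by
a matrix `A ∈ GL(2, ℤ)` (`det A = ±1`) with no eigenvalue of absolute value `1`, and
any `y₀ ∈ 𝕋²`, the set `ND(T, y₀)` is dense in `𝕋²`. -/
theorem hyperbolic_auto_nondense_dense (A : Matrix (Fin 2) (Fin 2) ℤ)
    (hdet : A.det = 1 ∨ A.det = -1)
    (heig : ∀ c : ℂ, (Matrix.charpoly (A.map (fun z : ℤ => (z : ℂ)))).IsRoot c →
      ‖c‖ ≠ 1)
    (T : Torus2 → Torus2) (hT : ∀ v : Plane, T (projT2 v) = projT2 (linAct A v))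
    (y₀ : Torus2) :
    Dense (nonDenseSet T y₀) :=
  hyperbolic_auto_nondense_dense_general A hdet T hT y₀
end
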